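/- arXiv:1905.00527 — 2 statements merged into one kernel-verified Lean document; each statement's English description precedes it below -/
import Mathlib

section
/- Every AP-rich subset of ℕ (i.e., every subset containing arithmetic progressions of arbitrary finite length) is not an I₀ set. -/
/-- A sequence `ψ : ℕ → ℂ` is almost periodic if it is a uniform limit of
trigonometric polynomials. -/
def AlmostPeriodic (ψ : ℕ → ℂ) : Prop :=
  ∀ ε : ℝ, 0 < ε → ∃ (m : ℕ) (c : Fin m → ℂ) (α : Fin m → ℝ),
    ∀ n : ℕ, ‖ψ n - ∑ j, c j * Complex.exp (2 * (Real.pi : ℂ) * Complex.I * (n : ℂ) * (α j : ℂ))‖ < ε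

/-- A set `E ⊆ ℕ` is an `I₀` set if every bounded function on `E` extends to an
almost periodic sequence on `ℕ`. -/
def IsI0Set (E : Set ℕ) : Prop :=
  ∀ b : ℕ → ℂ, (∃ C : ℝ, ∀ n ∈ E, ‖b n‖ ≤ C) →
    ∃ ψ : ℕ → ℂ, AlmostPeriodic ψ ∧ ∀ r ∈ E, ψ r = b r

/-- A set `E ⊆ ℕ` is AP-rich if it contains arithmetic progressions of arbitrary
finite length. -/
def APRich (E : Set ℕ) : Prop :=
  ∀ k : ℕ, ∃ x y : ℕ, 0 < y ∧ ∀ i < k, x + i * y ∈ E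

/-!
An almost periodic `ψ` is within `ε/3` of a trigonometric polynomial with frequencies `α j`, and
by Dirichlet's simultaneous approximation on the torus there is an `M` such that for every `y`
some `q ≤ M` makes all `q * y * α j` nearly integers; hence `q * y` is an `ε`-almost period
of `ψ`. On the other hand, an AP-rich set contains progressions `x, x + y, …, x + k * y` of
every length, which can be chosen one beyond the other. The indicator of their starting points
is bounded, equals `1` at `x` and `0` at `x + q * y` for `1 ≤ q ≤ k`, so no almost periodic
sequence extends it.
-/

open Complex MeasureTheory Metric

noncomputable def trigPoly {ι : Type*} [Fintype ι] (c : ι → ℂ) (α : ι → ℝ) (n : ℕ) : ℂ :=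
  ∑ j, c j * exp (2 * (Real.pi : ℂ) * I * (n : ℂ) * (α j : ℂ))

theorem norm_exp_two_pi_I_mul_sub_one_le (θ : ℝ) :
    ‖exp (2 * (Real.pi : ℂ) * I * θ) - 1‖ ≤ 2 * Real.pi * ‖(θ : AddCircle (1 : ℝ))‖ := by
  have hθ : exp (2 * (Real.pi : ℂ) * I * θ) =
      exp (I * ((2 * Real.pi * (θ - round θ) : ℝ) : ℂ)) := by
    rw [← mul_one (exp (I * _)), ← exp_int_mul_two_pi_mul_I (round θ), ← exp_add]
    congr 1; push_cast; ring
  rw [hθ, AddCircle.norm_eq, inv_one, one_mul, mul_one]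
  refine Real.norm_exp_I_mul_ofReal_sub_one_le.trans_eq ?_
  rw [Real.norm_eq_abs, abs_mul, abs_of_pos Real.two_pi_pos]

theorem norm_trigPoly_add_sub_le {ι : Type*} [Fintype ι] (c : ι → ℂ) (α : ι → ℝ) (n k : ℕ)
    {δ : ℝ} (hδ : ∀ j, ‖((k * α j : ℝ) : AddCircle (1 : ℝ))‖ ≤ δ) :
    ‖trigPoly c α (n + k) - trigPoly c α n‖ ≤ 2 * Real.pi * δ * ∑ j, ‖c j‖ := by
  rw [trigPoly, trigPoly, ← Finset.sum_sub_distrib, Finset.mul_sum]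
  refine (norm_sum_le _ _).trans (Finset.sum_le_sum fun j _ => ?_)
  set θ : ℝ := 2 * Real.pi * n * α j
  have hsplit : c j * exp (2 * (Real.pi : ℂ) * I * ((n + k : ℕ) : ℂ) * (α j : ℂ)) -
      c j * exp (2 * (Real.pi : ℂ) * I * (n : ℂ) * (α j : ℂ)) =
      c j * exp (θ * I) * (exp (2 * (Real.pi : ℂ) * I * ((k * α j : ℝ) : ℂ)) - 1) := by
    rw [show 2 * (Real.pi : ℂ) * I * ((n + k : ℕ) : ℂ) * (α j : ℂ) =
        θ * I + 2 * (Real.pi : ℂ) * I * ((k * α j : ℝ) : ℂ) by simp only [θ]; push_cast; ring,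
      show 2 * (Real.pi : ℂ) * I * (n : ℂ) * (α j : ℂ) = θ * I by simp only [θ]; push_cast; ring,
      exp_add]
    ring
  rw [hsplit, norm_mul, norm_mul, norm_exp_ofReal_mul_I, mul_one, mul_comm]
  gcongr
  exact (norm_exp_two_pi_I_mul_sub_one_le _).trans (by gcongr; exact hδ j)

theorem AddCircle.exists_nsmul_forall_norm_le {ι : Type*} [Fintype ι] {δ : ℝ} (hδ : 0 < δ) :
    ∃ M : ℕ, ∀ ξ : ι → AddCircle (1 : ℝ), ∃ q ∈ Set.Icc 1 M, ∀ j, ‖q • ξ j‖ ≤ δ := by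
  set r := min δ 1
  have hr : 0 < r := lt_min hδ one_pos
  have hr1 : r ≤ 1 := min_le_right δ 1
  set M := ⌈r⁻¹ ^ Fintype.card ι⌉₊
  have hvol : volume (Set.univ : Set (ι → AddCircle (1 : ℝ))) ≤
      (M + 1) • volume (closedBall (0 : ι → AddCircle (1 : ℝ)) (r / 2)) := by
    rw [← Set.pi_univ, closedBall_pi _ (by positivity), volume_pi_pi, volume_pi_pi]
    simp only [AddCircle.measure_univ, AddCircle.volume_closedBall, mul_div_cancel₀ r two_ne_zero,
      min_eq_right hr1, ENNReal.ofReal_one, Finset.prod_const_one,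
      Finset.prod_const, Finset.card_univ, nsmul_eq_mul]
    rw [← ENNReal.ofReal_pow hr.le, ← ENNReal.ofReal_natCast, ← ENNReal.ofReal_one,
      ← ENNReal.ofReal_mul (by positivity)]
    refine ENNReal.ofReal_le_ofReal ?_
    calc (1 : ℝ) = r⁻¹ ^ Fintype.card ι * r ^ Fintype.card ι := by
          rw [← mul_pow, inv_mul_cancel₀ hr.ne', one_pow]
      _ ≤ (M + 1 : ℕ) * r ^ Fintype.card ι := by
          gcongr; push_cast; exact (Nat.le_ceil _).trans (by linarith)
  refine ⟨M, fun ξ => ?_⟩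
  obtain ⟨q, hq, hqξ⟩ := NormedAddCommGroup.exists_norm_nsmul_le (μ := volume) ξ
    (Nat.ceil_pos.2 (by positivity)) r hvol
  exact ⟨q, hq, fun j => (norm_le_pi_norm (q • ξ) j).trans (hqξ.trans (min_le_left _ _))⟩

theorem AlmostPeriodic.exists_mul_almost_period {ψ : ℕ → ℂ} (hψ : AlmostPeriodic ψ) {ε : ℝ}
    (hε : 0 < ε) : ∃ M : ℕ, ∀ y : ℕ, ∃ q ∈ Set.Icc 1 M, ∀ n, ‖ψ (n + q * y) - ψ n‖ < ε := by
  obtain ⟨m, c, α, hP⟩ := hψ (ε / 3) (by positivity)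
  have hψP : ∀ n, ‖ψ n - trigPoly c α n‖ < ε / 3 := hP
  set C := ∑ j, ‖c j‖
  set δ := ε / (3 * (2 * Real.pi * (C + 1)))
  have hC : 0 ≤ C := Finset.sum_nonneg fun j _ => norm_nonneg (c j)
  have hδ : 0 < δ := by positivity
  have hδC : 2 * Real.pi * δ * C ≤ ε / 3 :=
    calc 2 * Real.pi * δ * C ≤ 2 * Real.pi * δ * (C + 1) := by gcongr; linarith
      _ = ε / 3 := by simp only [δ]; field_simp
  obtain ⟨M, hM⟩ := AddCircle.exists_nsmul_forall_norm_le (ι := Fin m) hδ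
  refine ⟨M, fun y => ?_⟩
  obtain ⟨q, hq, hqξ⟩ := hM fun j => ((y * α j : ℝ) : AddCircle (1 : ℝ))
  refine ⟨q, hq, fun n => ?_⟩
  have hshift := norm_trigPoly_add_sub_le c α n (q * y) fun j => by
    simpa only [← AddCircle.coe_nsmul, nsmul_eq_mul, Nat.cast_mul, mul_assoc] using hqξ j
  have h₁ := norm_sub_le_norm_sub_add_norm_sub (ψ (n + q * y)) (trigPoly c α (n + q * y)) (ψ n)
  have h₂ := norm_sub_le_norm_sub_add_norm_sub (trigPoly c α (n + q * y)) (trigPoly c α n) (ψ n)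
  rw [norm_sub_rev (trigPoly c α n)] at h₂
  linarith [hψP (n + q * y), hψP n, hshift.trans hδC]

namespace APRich

variable {E : Set ℕ}

theorem exists_ap_ge (hE : APRich E) (N k : ℕ) :
    ∃ p : ℕ × ℕ, N ≤ p.1 ∧ 0 < p.2 ∧ ∀ i ≤ k, p.1 + i * p.2 ∈ E := by
  obtain ⟨x, y, hy, hxy⟩ := hE (N + k + 1)
  refine ⟨(x + N * y, y), Nat.le_add_left_of_le (Nat.le_mul_of_pos_right N hy), hy, fun i hi => ?_⟩
  simpa only [add_assoc, add_mul] using hxy (N + i) (by omega)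

noncomputable def progression (hE : APRich E) : ℕ → ℕ × ℕ
  | 0 => (hE.exists_ap_ge 0 0).choose
  | t + 1 =>
    (hE.exists_ap_ge ((hE.progression t).1 + t * (hE.progression t).2 + 1) (t + 1)).choose

theorem progression_spec (hE : APRich E) (t : ℕ) :
    0 < (hE.progression t).2 ∧ ∀ i ≤ t, (hE.progression t).1 + i * (hE.progression t).2 ∈ E := by
  cases t with
  | zero => exact (hE.exists_ap_ge 0 0).choose_spec.2
  | succ t => exact (hE.exists_ap_ge _ (t + 1)).choose_spec.2

theorem progression_last_lt (hE : APRich E) (t : ℕ) :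
    (hE.progression t).1 + t * (hE.progression t).2 < (hE.progression (t + 1)).1 :=
  (hE.exists_ap_ge _ (t + 1)).choose_spec.1

theorem strictMono_progression_fst (hE : APRich E) : StrictMono fun t => (hE.progression t).1 :=
  strictMono_nat_of_lt_succ fun t => (Nat.le_add_right _ _).trans_lt (hE.progression_last_lt t)

theorem exists_set_meeting_progressions_only_at_start (hE : APRich E) :
    ∃ A : Set ℕ, ∀ k, ∃ x y, x ∈ E ∩ A ∧ ∀ i ∈ Set.Icc 1 k, x + i * y ∈ E \ A := by
  refine ⟨Set.range fun t => (hE.progression t).1, fun k => ?_⟩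
  obtain ⟨hy, hmem⟩ := hE.progression_spec k
  refine ⟨_, _, ⟨by simpa using hmem 0 k.zero_le, k, rfl⟩, fun i ⟨hi, hik⟩ => ⟨hmem i hik, ?_⟩⟩
  rintro ⟨t, ht⟩
  simp only at ht
  have hmono := hE.strictMono_progression_fst
  have hkt : k < t := hmono.lt_iff_lt.1 (ht ▸ Nat.lt_add_of_pos_right (Nat.mul_pos hi hy))
  have hle : (hE.progression (k + 1)).1 ≤ (hE.progression t).1 := hmono.monotone hkt
  have hlast := hE.progression_last_lt k
  have hiy := Nat.mul_le_mul_right (hE.progression k).2 hik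
  omega

end APRich

/-- AP-rich sets are not `I₀`. -/
theorem apRich_not_I0 (E : Set ℕ) (hE : APRich E) : ¬ IsI0Set E := by
  intro hI0
  obtain ⟨A, hA⟩ := hE.exists_set_meeting_progressions_only_at_start
  obtain ⟨ψ, hψ, hψE⟩ := hI0 (A.indicator 1)
    ⟨1, fun n _ => (norm_indicator_le_norm_self ..).trans_eq (by simp)⟩
  obtain ⟨M, hM⟩ := hψ.exists_mul_almost_period one_pos
  obtain ⟨x, y, ⟨hxE, hxA⟩, hprog⟩ := hA M
  obtain ⟨q, hq, hψq⟩ := hM y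
  obtain ⟨hqE, hqA⟩ := hprog q hq
  have hjump : ‖ψ (x + q * y) - ψ x‖ = 1 := by
    rw [hψE _ hqE, hψE _ hxE, Set.indicator_of_notMem hqA, Set.indicator_of_mem hxA]
    simp
  exact lt_irrefl _ (hjump ▸ hψq x)
end

section
/- If E, F ⊆ ℕ are both I₀ sets and E and F are separable by some rotation, then E ∪ F is an I₀ set. -/
/-- Two sets `A, B ⊆ ℕ` are separable by some rotation if there are `d ∈ ℕ` and
`α ∈ (ℝ/ℤ)^d` such that the closures of `Aα` and `Bα` in `(ℝ/ℤ)^d` are disjoint. -/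
def SeparableByRotation (A B : Set ℕ) : Prop :=
  ∃ (d : ℕ) (α : Fin d → AddCircle (1 : ℝ)),
    Disjoint (closure ((fun a : ℕ => a • α) '' A)) (closure ((fun b : ℕ => b • α) '' B))

/-!
Almost periodic sequences are exactly the uniform closure, inside the Banach algebra `ℕ →ᵇ ℂ`,
of the algebra spanned by the characters `n ↦ e^{2πi n a}`; in particular they form an algebra.
For a continuous `g` on the torus `(ℝ/ℤ)^d`, the sequence `n ↦ g (n • α)` is almost periodic,
since by Stone–Weierstrass `g` is a uniform limit of monomials `mFourier k`, which pull back to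
characters. Urysohn's lemma on the torus turns a rotation separating `E` from `F` into an almost
periodic `χ` equal to `1` on `E` and `0` on `F`, and then `ψ_F + χ (ψ_E - ψ_F)` interpolates
`b` on `E ∪ F` whenever `ψ_E` and `ψ_F` interpolate it on `E` and on `F`.
-/

open BoundedContinuousFunction Complex Set Submodule UnitAddTorus

noncomputable section

/-- Bundled as a monoid hom so that the algebra generated by its range is the span of its range. -/
def expSeq : Multiplicative ℝ →* (ℕ →ᵇ ℂ) where
  toFun a := ofNormedAddCommGroupDiscrete
    (fun n : ℕ => exp (2 * (Real.pi : ℂ) * I * (n : ℂ) * (a.toAdd : ℂ))) 1 fun n => by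
      rw [show 2 * (Real.pi : ℂ) * I * n * a.toAdd = ((2 * Real.pi * n * a.toAdd : ℝ) : ℂ) * I by
        push_cast; ring, norm_exp_ofReal_mul_I]
  map_one' := by ext n; simp
  map_mul' a b := by
    ext n
    simp only [toAdd_mul, ofReal_add, coe_mul, coe_ofNormedAddCommGroupDiscrete, Pi.mul_apply,
      ← exp_add]
    ring_nf

theorem sum_smul_expSeq_apply {m : ℕ} (c : Fin m → ℂ) (α : Fin m → ℝ) (n : ℕ) :
    (∑ j, c j • expSeq (.ofAdd (α j))) n =
      ∑ j, c j * exp (2 * (Real.pi : ℂ) * I * (n : ℂ) * (α j : ℂ)) := by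
  simp [expSeq]

theorem mem_adjoin_range_expSeq {t : ℕ →ᵇ ℂ} :
    t ∈ Algebra.adjoin ℂ (range expSeq) ↔
      ∃ (m : ℕ) (c : Fin m → ℂ) (α : Fin m → ℝ), ∑ j, c j • expSeq (.ofAdd (α j)) = t := by
  rw [← Subalgebra.mem_toSubmodule, Algebra.adjoin_eq_span, MonoidHom.mclosure_range,
    MonoidHom.coe_mrange, mem_span_set']
  constructor
  · rintro ⟨m, c, g, rfl⟩
    choose α hα using fun j => (g j).2
    exact ⟨m, c, fun j => (α j).toAdd, by simp [hα]⟩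
  · rintro ⟨m, c, α, rfl⟩
    exact ⟨m, c, fun j => ⟨_, mem_range_self _⟩, rfl⟩

theorem AlmostPeriodic.exists_bound {ψ : ℕ → ℂ} (h : AlmostPeriodic ψ) :
    ∃ C, ∀ n, ‖ψ n‖ ≤ C := by
  obtain ⟨m, c, α, hα⟩ := h 1 one_pos
  refine ⟨1 + ‖∑ j, c j • expSeq (.ofAdd (α j))‖, fun n => ?_⟩
  have ht := norm_coe_le_norm (∑ j, c j • expSeq (.ofAdd (α j))) n
  rw [sum_smul_expSeq_apply] at ht
  linarith [norm_le_norm_sub_add (ψ n) (∑ j, c j * exp (2 * (Real.pi : ℂ) * I * n * α j)), hα n]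

theorem almostPeriodic_iff {ψ : ℕ → ℂ} : AlmostPeriodic ψ ↔
    ∃ f ∈ (Algebra.adjoin ℂ (range expSeq)).topologicalClosure, ⇑f = ψ := by
  simp_rw [← SetLike.mem_coe, Subalgebra.topologicalClosure_coe, Metric.mem_closure_iff]
  constructor
  · intro h
    obtain ⟨C, hC⟩ := h.exists_bound
    refine ⟨ofNormedAddCommGroupDiscrete ψ C hC, fun ε hε => ?_, rfl⟩
    obtain ⟨m, c, α, hα⟩ := h (ε / 2) (half_pos hε)
    refine ⟨_, mem_adjoin_range_expSeq.2 ⟨m, c, α, rfl⟩, ?_⟩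
    refine lt_of_le_of_lt ((dist_le (half_pos hε).le).2 fun n => ?_) (half_lt_self hε)
    simpa [dist_eq_norm, sum_smul_expSeq_apply] using (hα n).le
  · rintro ⟨f, hf, rfl⟩ ε hε
    obtain ⟨t, ht, hft⟩ := hf ε hε
    obtain ⟨m, c, α, rfl⟩ := mem_adjoin_range_expSeq.1 ht
    refine ⟨m, c, α, fun n => ?_⟩
    rw [← sum_smul_expSeq_apply, ← dist_eq_norm]
    exact (dist_coe_le_dist n).trans_lt hft

namespace AlmostPeriodic

variable {ψ φ : ℕ → ℂ}

theorem add (hψ : AlmostPeriodic ψ) (hφ : AlmostPeriodic φ) : AlmostPeriodic (ψ + φ) := by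
  obtain ⟨f, hf, rfl⟩ := almostPeriodic_iff.1 hψ
  obtain ⟨g, hg, rfl⟩ := almostPeriodic_iff.1 hφ
  exact almostPeriodic_iff.2 ⟨f + g, add_mem hf hg, rfl⟩

theorem sub (hψ : AlmostPeriodic ψ) (hφ : AlmostPeriodic φ) : AlmostPeriodic (ψ - φ) := by
  obtain ⟨f, hf, rfl⟩ := almostPeriodic_iff.1 hψ
  obtain ⟨g, hg, rfl⟩ := almostPeriodic_iff.1 hφ
  exact almostPeriodic_iff.2 ⟨f - g, sub_mem hf hg, rfl⟩

theorem mul (hψ : AlmostPeriodic ψ) (hφ : AlmostPeriodic φ) : AlmostPeriodic (ψ * φ) := by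
  obtain ⟨f, hf, rfl⟩ := almostPeriodic_iff.1 hψ
  obtain ⟨g, hg, rfl⟩ := almostPeriodic_iff.1 hφ
  exact almostPeriodic_iff.2 ⟨f * g, mul_mem hf hg, rfl⟩

end AlmostPeriodic

section compSeq

variable (𝕜 : Type*) {X E : Type*} [NormedField 𝕜] [TopologicalSpace X] [CompactSpace X]
  [NormedAddCommGroup E] [NormedSpace 𝕜 E]

def compSeq (u : ℕ → X) : C(X, E) →L[𝕜] (ℕ →ᵇ E) :=
  (compContinuousCLM E 𝕜 ⟨u, continuous_of_discreteTopology⟩).comp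
    (ContinuousMap.linearIsometryBoundedOfCompact X E 𝕜).toLinearIsometry.toContinuousLinearMap

@[simp]
theorem compSeq_apply (u : ℕ → X) (g : C(X, E)) (n : ℕ) : compSeq 𝕜 u g n = g (u n) := rfl

end compSeq

theorem compSeq_nsmul_mFourier {d : Type*} [Fintype d] (k : d → ℤ) (a : d → ℝ) :
    compSeq ℂ (fun n : ℕ => n • fun i => (a i : UnitAddCircle)) (mFourier k) =
      expSeq (.ofAdd (∑ i, k i * a i)) := by
  ext n
  simp only [compSeq_apply, mFourier, ContinuousMap.coe_mk, Pi.smul_apply, ← AddCircle.coe_nsmul,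
    fourier_coe_apply, ← exp_sum, expSeq, MonoidHom.coe_mk, OneHom.coe_mk,
    coe_ofNormedAddCommGroupDiscrete, toAdd_ofAdd]
  push_cast
  rw [Finset.mul_sum]
  refine congrArg exp (Finset.sum_congr rfl fun i _ => ?_)
  rw [nsmul_eq_mul]
  ring

theorem almostPeriodic_comp_nsmul {d : Type*} [Fintype d] (g : C(UnitAddTorus d, ℂ))
    (x : UnitAddTorus d) : AlmostPeriodic fun n : ℕ => g (n • x) := by
  choose a ha using fun i => QuotientAddGroup.mk_surjective (x i)
  obtain rfl : (fun i => (a i : UnitAddCircle)) = x := funext ha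
  set P := compSeq ℂ (E := ℂ) (fun n : ℕ => n • fun i => (a i : UnitAddCircle))
  have hP : span ℂ (range mFourier) ≤
      (Subalgebra.toSubmodule (Algebra.adjoin ℂ (range expSeq))).comap P.toLinearMap :=
    span_le.2 <| range_subset_iff.2 fun k =>
      Algebra.subset_adjoin ⟨_, (compSeq_nsmul_mFourier k a).symm⟩
  have hg : g ∈ closure (span ℂ (range (mFourier (d := d))) : Set C(UnitAddTorus d, ℂ)) := by
    rw [← Submodule.topologicalClosure_coe, span_mFourier_closure_eq_top]
    trivial
  refine almostPeriodic_iff.2 ⟨P g, ?_, rfl⟩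
  rw [← SetLike.mem_coe, Subalgebra.topologicalClosure_coe]
  exact map_mem_closure P.continuous hg fun f hf => hP hf

theorem SeparableByRotation.exists_almostPeriodic_one_zero {E F : Set ℕ}
    (h : SeparableByRotation E F) :
    ∃ χ : ℕ → ℂ, AlmostPeriodic χ ∧ (∀ r ∈ E, χ r = 1) ∧ ∀ r ∈ F, χ r = 0 := by
  obtain ⟨d, α, hdisj⟩ := h
  obtain ⟨f, hfF, hfE, -⟩ :=
    exists_continuous_zero_one_of_isClosed isClosed_closure isClosed_closure hdisj.symm
  refine ⟨fun n => f (n • α), almostPeriodic_comp_nsmul (.comp ⟨ofReal, continuous_ofReal⟩ f) α,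
    fun r hr => ?_, fun r hr => ?_⟩
  · simp [hfE (subset_closure (mem_image_of_mem _ hr))]
  · simp [hfF (subset_closure (mem_image_of_mem _ hr))]

end

/-- If `E` and `F` are `I₀` and separable by some rotation, then `E ∪ F` is `I₀`. -/
theorem I0_union_of_separable (E F : Set ℕ)
    (hE : IsI0Set E) (hF : IsI0Set F) (hEF : SeparableByRotation E F) :
    IsI0Set (E ∪ F) := by
  rintro b ⟨C, hC⟩
  obtain ⟨ψE, hψE, hψEb⟩ := hE b ⟨C, fun n hn => hC n (Or.inl hn)⟩
  obtain ⟨ψF, hψF, hψFb⟩ := hF b ⟨C, fun n hn => hC n (Or.inr hn)⟩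
  obtain ⟨χ, hχ, hχE, hχF⟩ := hEF.exists_almostPeriodic_one_zero
  refine ⟨ψF + χ * (ψE - ψF), hψF.add (hχ.mul (hψE.sub hψF)), ?_⟩
  rintro r (hr | hr)
  · simp [hχE r hr, hψEb r hr]
  · simp [hχF r hr, hψFb r hr]
end
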